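/- Performance difference lemma: for any two policies π and π̃ in a finite discounted MDP with discount γ ∈ [0,1), η(π̃) − η(π) = E_{τ∼π̃}[Σ_{t=0}^∞ γ^t A_π(s_t, a_t)], where η denotes the expected discounted return and A_π the advantage function of π. -/

import Mathlib

noncomputable section

variable {S A : Type*} [Fintype S] [Fintype A] [DecidableEq S]

/-- The state distribution at time `t` induced by policy `π`, transition kernel `P`, and
initial distribution `μ`. -/
def stateDist (P : S → A → S → ℝ) (π : S → A → ℝ) (μ : S → ℝ) : ℕ → S → ℝ
  | 0 => μ
  | (t + 1) => fun s' => ∑ s, ∑ a, stateDist P π μ t s * π s a * P s a s'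

/-- Expected discounted return `η(π) = E_{τ∼π}[∑_t γ^t r(s_t,a_t)]` from initial
distribution `μ`. -/
def expReturn (γ : ℝ) (r : S → A → ℝ) (P : S → A → S → ℝ) (π : S → A → ℝ) (μ : S → ℝ) : ℝ :=
  ∑' t : ℕ, γ ^ t * ∑ s, ∑ a, stateDist P π μ t s * π s a * r s a

/-- Value function `V_π(s)`: expected discounted return starting from state `s`. -/
def valueV (γ : ℝ) (r : S → A → ℝ) (P : S → A → S → ℝ) (π : S → A → ℝ) (s : S) : ℝ :=
  expReturn γ r P π (fun s' => if s' = s then 1 else 0)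

/-- Action-value function `Q_π(s,a) = r(s,a) + γ ∑_{s'} P(s'|s,a) V_π(s')`. -/
def valueQ (γ : ℝ) (r : S → A → ℝ) (P : S → A → S → ℝ) (π : S → A → ℝ) (s : S) (a : A) : ℝ :=
  r s a + γ * ∑ s', P s a s' * valueV γ r P π s'

/-- Advantage function `A_π(s,a) = Q_π(s,a) − V_π(s)`. -/
def advantage (γ : ℝ) (r : S → A → ℝ) (P : S → A → S → ℝ) (π : S → A → ℝ) (s : S) (a : A) : ℝ :=
  valueQ γ r P π s a - valueV γ r P π s

/-! The Bellman residual `r(s, a) + γ ∑_{s'} P(s' | s, a) V(s') - V(s)` of any state function `V`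
telescopes along the trajectory of `π̃`: its expected discounted sum is `η(π̃) - E_μ[V]`, the
boundary term `γ^t E[V(s_t)]` vanishing because the state distributions keep bounded `ℓ¹`-mass
and `γ < 1`. For `V = V_π` the residual is the advantage `A_π`, and `E_μ[V_π] = η(π)` because the
state distribution depends linearly on the initial one. -/

open Finset Filter Topology

lemma summable_pow_mul_of_abs_le {γ : ℝ} (hγ0 : 0 ≤ γ) (hγ1 : γ < 1) {c : ℕ → ℝ} {M : ℝ}
    (hc : ∀ t, |c t| ≤ M) : Summable fun t => γ ^ t * c t := by
  refine ((summable_geometric_of_lt_one hγ0 hγ1).mul_right M).of_norm_bounded fun t => ?_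
  rw [Real.norm_eq_abs, abs_mul, abs_of_nonneg (pow_nonneg hγ0 t)]
  exact mul_le_mul_of_nonneg_left (hc t) (pow_nonneg hγ0 t)

lemma hasSum_of_eq_add_telescope {f u g : ℕ → ℝ} {a : ℝ} (hf : Summable f)
    (hfug : ∀ t, f t = u t + (g (t + 1) - g t)) (hu : HasSum u a)
    (hg : Tendsto g atTop (𝓝 0)) : HasSum f (a - g 0) := by
  rw [hf.hasSum_iff_tendsto_nat]
  have hpartial : ∀ n, ∑ t ∈ range n, f t = ∑ t ∈ range n, u t + (g n - g 0) := fun n => by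
    rw [sum_congr rfl fun t _ => hfug t, sum_add_distrib, sum_range_sub]
  simpa [hpartial, sub_eq_add_neg] using hu.tendsto_sum_nat.add (hg.sub_const (g 0))

section Markov

omit [DecidableEq S]

lemma sum_mul_policy_mul (d : S → ℝ) (π : S → A → ℝ) (x : S → A → ℝ) :
    ∑ s, ∑ a, d s * π s a * x s a = ∑ s, d s * ∑ a, π s a * x s a := by
  simp only [mul_sum, mul_assoc]

variable (P : S → A → S → ℝ) (π : S → A → ℝ)

lemma sum_stateDist_succ_mul (μ : S → ℝ) (t : ℕ) (y : S → ℝ) :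
    ∑ s', stateDist P π μ (t + 1) s' * y s'
      = ∑ s, ∑ a, stateDist P π μ t s * π s a * ∑ s', P s a s' * y s' := by
  simp only [stateDist, sum_mul, mul_sum]
  rw [sum_comm]
  refine sum_congr rfl fun s _ => ?_
  rw [sum_comm]
  exact sum_congr rfl fun a _ => sum_congr rfl fun s' _ => by ring

lemma sum_stateDist_mul_bellmanResidual (hπ1 : ∀ s, ∑ a, π s a = 1) (γ : ℝ) (r : S → A → ℝ)
    (μ : S → ℝ) (t : ℕ) (V : S → ℝ) :
    ∑ s, ∑ a, stateDist P π μ t s * π s a * (r s a + γ * ∑ s', P s a s' * V s' - V s)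
      = ∑ s, ∑ a, stateDist P π μ t s * π s a * r s a
        + γ * ∑ s', stateDist P π μ (t + 1) s' * V s' - ∑ s, stateDist P π μ t s * V s := by
  have hV : ∑ s, stateDist P π μ t s * V s = ∑ s, ∑ a, stateDist P π μ t s * π s a * V s := by
    simp only [← sum_mul, ← mul_sum, hπ1, mul_one]
  rw [sum_stateDist_succ_mul, hV, mul_sum, ← sum_add_distrib, ← sum_sub_distrib]
  refine sum_congr rfl fun s _ => ?_
  rw [mul_sum, ← sum_add_distrib, ← sum_sub_distrib]
  exact sum_congr rfl fun a _ => by ring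

variable (hP0 : ∀ s a s', 0 ≤ P s a s') (hP1 : ∀ s a, ∑ s', P s a s' = 1)
  (hπ0 : ∀ s a, 0 ≤ π s a) (hπ1 : ∀ s, ∑ a, π s a = 1)
include hP0 hP1 hπ0 hπ1

lemma sum_abs_stateDist_le (μ : S → ℝ) (t : ℕ) :
    ∑ s, |stateDist P π μ t s| ≤ ∑ s, |μ s| := by
  induction t with
  | zero => rfl
  | succ t ih =>
    calc ∑ s', |∑ s, ∑ a, stateDist P π μ t s * π s a * P s a s'|
        ≤ ∑ s', ∑ s, ∑ a, |stateDist P π μ t s| * π s a * P s a s' := by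
          refine sum_le_sum fun s' _ => (abs_sum_le_sum_abs _ _).trans ?_
          refine sum_le_sum fun s _ => (abs_sum_le_sum_abs _ _).trans ?_
          simp only [abs_mul, abs_of_nonneg (hπ0 _ _), abs_of_nonneg (hP0 _ _ _), le_refl]
      _ = ∑ s, |stateDist P π μ t s| := by
          rw [sum_comm]
          refine sum_congr rfl fun s _ => ?_
          rw [sum_comm]
          simp only [← mul_sum, hP1, mul_one, hπ1]
      _ ≤ ∑ s, |μ s| := ih

lemma abs_sum_stateDist_mul_le (μ : S → ℝ) (t : ℕ) (y : S → ℝ) :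
    |∑ s, stateDist P π μ t s * y s| ≤ (∑ s, |μ s|) * ‖y‖ :=
  calc |∑ s, stateDist P π μ t s * y s|
      ≤ ∑ s, |stateDist P π μ t s| * ‖y‖ := by
        refine (abs_sum_le_sum_abs _ _).trans (sum_le_sum fun s _ => ?_)
        rw [abs_mul]
        exact mul_le_mul_of_nonneg_left (norm_le_pi_norm y s) (abs_nonneg _)
    _ ≤ (∑ s, |μ s|) * ‖y‖ := by
        rw [← sum_mul]
        exact mul_le_mul_of_nonneg_right (sum_abs_stateDist_le P π hP0 hP1 hπ0 hπ1 μ t)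
          (norm_nonneg y)

variable {γ : ℝ} (hγ0 : 0 ≤ γ) (hγ1 : γ < 1)
include hγ0 hγ1

lemma summable_discounted_sum_stateDist_mul (μ : S → ℝ) (y : S → ℝ) :
    Summable fun t => γ ^ t * ∑ s, stateDist P π μ t s * y s :=
  summable_pow_mul_of_abs_le hγ0 hγ1 (abs_sum_stateDist_mul_le P π hP0 hP1 hπ0 hπ1 μ · y)

lemma summable_discounted_sum_stateDist_policy_mul (μ : S → ℝ) (x : S → A → ℝ) :
    Summable fun t => γ ^ t * ∑ s, ∑ a, stateDist P π μ t s * π s a * x s a := by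
  simpa only [sum_mul_policy_mul] using
    summable_discounted_sum_stateDist_mul P π hP0 hP1 hπ0 hπ1 hγ0 hγ1 μ
      fun s => ∑ a, π s a * x s a

lemma hasSum_discounted_bellmanResidual (r : S → A → ℝ) (μ : S → ℝ) (V : S → ℝ) :
    HasSum (fun t => γ ^ t * ∑ s, ∑ a,
        stateDist P π μ t s * π s a * (r s a + γ * ∑ s', P s a s' * V s' - V s))
      (expReturn γ r P π μ - ∑ s, μ s * V s) := by
  have := hasSum_of_eq_add_telescope
    (summable_discounted_sum_stateDist_policy_mul P π hP0 hP1 hπ0 hπ1 hγ0 hγ1 μ _)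
    (fun t => by rw [sum_stateDist_mul_bellmanResidual P π hπ1, pow_succ]; ring)
    (summable_discounted_sum_stateDist_policy_mul P π hP0 hP1 hπ0 hπ1 hγ0 hγ1 μ r).hasSum
    (summable_discounted_sum_stateDist_mul P π hP0 hP1 hπ0 hπ1 hγ0 hγ1 μ V).tendsto_atTop_zero
  simpa only [pow_zero, one_mul, stateDist, expReturn] using this

end Markov

section Linearity

variable (P : S → A → S → ℝ) (π : S → A → ℝ)

lemma stateDist_eq_sum_mul_stateDist_single (μ : S → ℝ) (t : ℕ) (s : S) :
    stateDist P π μ t s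
      = ∑ s₀, μ s₀ * stateDist P π (fun s' => if s' = s₀ then 1 else 0) t s := by
  induction t generalizing s with
  | zero => simp [stateDist]
  | succ t ih =>
    simp only [stateDist, ih, sum_mul, mul_sum]
    conv_rhs => rw [sum_comm]
    refine sum_congr rfl fun s' _ => ?_
    rw [sum_comm]
    exact sum_congr rfl fun s₀ _ => sum_congr rfl fun a _ => by ring

lemma expReturn_eq_sum_mul_valueV (hP0 : ∀ s a s', 0 ≤ P s a s')
    (hP1 : ∀ s a, ∑ s', P s a s' = 1) (hπ0 : ∀ s a, 0 ≤ π s a) (hπ1 : ∀ s, ∑ a, π s a = 1)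
    {γ : ℝ} (hγ0 : 0 ≤ γ) (hγ1 : γ < 1) (r : S → A → ℝ) (μ : S → ℝ) :
    expReturn γ r P π μ = ∑ s₀, μ s₀ * valueV γ r P π s₀ := by
  have hterm : ∀ t, γ ^ t * ∑ s, ∑ a, stateDist P π μ t s * π s a * r s a
      = ∑ s₀, μ s₀ * (γ ^ t * ∑ s, ∑ a,
          stateDist P π (fun s' => if s' = s₀ then 1 else 0) t s * π s a * r s a) := fun t => by
    simp only [stateDist_eq_sum_mul_stateDist_single P π μ t, sum_mul, mul_sum]
    conv_rhs => rw [sum_comm]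
    refine sum_congr rfl fun s _ => ?_
    rw [sum_comm]
    exact sum_congr rfl fun s₀ _ => sum_congr rfl fun a _ => by ring
  simp only [expReturn, valueV, hterm, ← tsum_mul_left]
  exact Summable.tsum_finsetSum fun s₀ _ => (summable_discounted_sum_stateDist_policy_mul
    P π hP0 hP1 hπ0 hπ1 hγ0 hγ1 _ r).mul_left (μ s₀)

end Linearity

theorem stmt7_general
    (γ : ℝ) (hγ0 : 0 ≤ γ) (hγ1 : γ < 1)
    (r : S → A → ℝ)
    (P : S → A → S → ℝ) (hP_nonneg : ∀ s a s', 0 ≤ P s a s') (hP_sum : ∀ s a, ∑ s', P s a s' = 1)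
    (μ : S → ℝ)
    (π πt : S → A → ℝ)
    (hπ_nonneg : ∀ s a, 0 ≤ π s a) (hπ_sum : ∀ s, ∑ a, π s a = 1)
    (hπt_nonneg : ∀ s a, 0 ≤ πt s a) (hπt_sum : ∀ s, ∑ a, πt s a = 1) :
    expReturn γ r P πt μ - expReturn γ r P π μ
      = ∑' t : ℕ, γ ^ t * ∑ s, ∑ a, stateDist P πt μ t s * πt s a * advantage γ r P π s a := by
  rw [expReturn_eq_sum_mul_valueV P π hP_nonneg hP_sum hπ_nonneg hπ_sum hγ0 hγ1 r μ]
  exact (hasSum_discounted_bellmanResidual P πt hP_nonneg hP_sum hπt_nonneg hπt_sum hγ0 hγ1 r μ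
    (valueV γ r P π)).tsum_eq.symm

/-- Performance difference lemma: for any two policies `π` and `π̃`,
`η(π̃) − η(π) = E_{τ∼π̃}[∑_t γ^t A_π(s_t,a_t)]`. -/
theorem stmt7
    (γ : ℝ) (hγ0 : 0 ≤ γ) (hγ1 : γ < 1)
    (r : S → A → ℝ)
    (P : S → A → S → ℝ) (hP_nonneg : ∀ s a s', 0 ≤ P s a s') (hP_sum : ∀ s a, ∑ s', P s a s' = 1)
    (μ : S → ℝ) (hμ_nonneg : ∀ s, 0 ≤ μ s) (hμ_sum : ∑ s, μ s = 1)
    (π πt : S → A → ℝ)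
    (hπ_nonneg : ∀ s a, 0 ≤ π s a) (hπ_sum : ∀ s, ∑ a, π s a = 1)
    (hπt_nonneg : ∀ s a, 0 ≤ πt s a) (hπt_sum : ∀ s, ∑ a, πt s a = 1) :
    expReturn γ r P πt μ - expReturn γ r P π μ
      = ∑' t : ℕ, γ ^ t * ∑ s, ∑ a, stateDist P πt μ t s * πt s a * advantage γ r P π s a :=
  stmt7_general γ hγ0 hγ1 r P hP_nonneg hP_sum μ π πt hπ_nonneg hπ_sum hπt_nonneg hπt_sum

end
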